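/- Assume additionally that A is unitary. Then for every 1 ≤ k ≤ N−1: h_{k+1,k} = σ_{k−1}(0)/σ_k(0) = s_k(0), h_{1,k} = −q_k(0)/(σ_{k−1}(0)·σ_k(0)), and, setting ṽ_k := σ_{k−1}(0)^{−1}·Σ_{j=0}^{k−1} conj(q_j(0))·v_{j+1}, the coupled recurrences A·v_k = s_k(0)·v_{k+1} + (−1)^{k−1}·c_k(0)·ṽ_k and ṽ_{k+1} = s_k(0)·ṽ_k + (−1)^k·conj(c_k(0))·v_{k+1} hold (isometric Arnoldi recurrence). -/

import Mathlib

open Polynomial Matrix Finset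

/-- The standard inner product `x^* y` on `ℂ^n` (conjugate-linear in the first slot). -/
noncomputable def inn {n : ℕ} (x y : Fin n → ℂ) : ℂ := ∑ i, (starRingEnd ℂ) (x i) * y i

/-- The Euclidean norm on `ℂ^n`. -/
noncomputable def nrm {n : ℕ} (x : Fin n → ℂ) : ℝ := Real.sqrt (inn x x).re

/-- `σ_k(δ) = sqrt(Σ_{j=0}^k |q_j(δ)|²)`. -/
noncomputable def sigmaP (q : ℕ → Polynomial ℂ) (δ : ℂ) (k : ℕ) : ℝ :=
  Real.sqrt (∑ j ∈ Finset.range (k + 1), ‖(q j).eval δ‖ ^ 2)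

/-! For unitary `A` the columns of `H` are orthonormal, being the coordinates of the orthonormal
vectors `A v_k`, and evaluating the recurrence of the `q_k` at `0` shows that
`(q_0(0), q_1(0), …)` annihilates every column but the last. Column `m` lives on the first
`m + 2` coordinates; by induction on `m`, orthogonality to the earlier columns forces its first
`m + 1` entries to be proportional to `conj q_j(0)`, and the annihilation relation together with
the normalisation of the column then determine the constant and `h_{m+1,m} = σ_m / σ_{m+1}`.
The two recurrences are these column formulas rewritten. -/

open ComplexConjugate
open scoped ComplexOrder

noncomputable def prefixNorm (p : ℕ → ℂ) (k : ℕ) : ℝ :=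
  √(∑ j ∈ range (k + 1), ‖p j‖ ^ 2)

lemma sigmaP_eq_prefixNorm (q : ℕ → ℂ[X]) (δ : ℂ) :
    sigmaP q δ = prefixNorm fun j => (q j).eval δ :=
  rfl

lemma prefixNorm_sq (p : ℕ → ℂ) (k : ℕ) :
    prefixNorm p k ^ 2 = ∑ j ∈ range (k + 1), ‖p j‖ ^ 2 :=
  Real.sq_sqrt (sum_nonneg fun _ _ => sq_nonneg _)

lemma prefixNorm_pos {p : ℕ → ℂ} (hp0 : p 0 ≠ 0) (k : ℕ) : 0 < prefixNorm p k :=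
  Real.sqrt_pos.mpr <| (pow_pos (norm_pos_iff.mpr hp0) 2).trans_le <|
    single_le_sum (f := fun j => ‖p j‖ ^ 2) (fun _ _ => sq_nonneg _) (mem_range.mpr k.succ_pos)

lemma sum_range_mul_conj (p : ℕ → ℂ) (k : ℕ) :
    ∑ j ∈ range (k + 1), p j * conj (p j) = (prefixNorm p k : ℂ) ^ 2 := by
  rw [← Complex.ofReal_pow, prefixNorm_sq]
  push_cast
  exact sum_congr rfl fun j _ => Complex.mul_conj' (p j)

lemma column_coeffs_eq_of_unit_of_null {a P : ℂ} {r σ τ : ℝ} (hr : 0 < r) (hσ : 0 < σ)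
    (hτ : 0 < τ) (hτσ : (τ : ℂ) ^ 2 = σ ^ 2 + P * conj P)
    (hnorm : σ ^ 2 * (conj a * a) + r * r = 1) (hnull : a * σ ^ 2 + r * P = 0) :
    a = -P / (σ * τ) ∧ (r : ℂ) = σ / τ := by
  have hnull_conj := congrArg conj hnull
  simp only [map_add, map_mul, map_pow, Complex.conj_ofReal, map_zero] at hnull_conj
  have hsq : (σ : ℂ) ^ 2 = (r * τ : ℝ) ^ 2 := by
    push_cast
    linear_combination (-σ ^ 2) * hnorm + (σ ^ 2 * conj a) * hnull - (r * P) * hnull_conj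
      - r ^ 2 * hτσ
  have hστ : σ = r * τ :=
    (pow_left_inj₀ hσ.le (by positivity) two_ne_zero).mp (by exact_mod_cast hsq)
  have hr_div : (r : ℂ) = σ / τ := by
    rw [hστ]
    push_cast
    field_simp
  refine ⟨?_, hr_div⟩
  have hσ0 : (σ : ℂ) ≠ 0 := Complex.ofReal_ne_zero.mpr hσ.ne'
  have hτ0 : (τ : ℂ) ≠ 0 := Complex.ofReal_ne_zero.mpr hτ.ne'
  rw [eq_div_iff (mul_ne_zero hσ0 hτ0)]
  refine mul_left_cancel₀ hσ0 ?_
  rw [hr_div] at hnull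
  field_simp at hnull
  linear_combination hnull

section UnitaryHessenberg

variable {h : ℕ → ℕ → ℂ} {p : ℕ → ℂ}

lemma column_eq_of_proportional {m : ℕ} (hp0 : p 0 = 1)
    (hprop : ∀ l ≤ m, h l m = conj (p l) * h 0 m)
    (hnorm : ∑ l ∈ range (m + 2), conj (h l m) * h l m = 1)
    (hnull : ∑ l ∈ range (m + 2), h l m * p l = 0)
    (hpos : 0 < h (m + 1) m) :
    h 0 m = -p (m + 1) / (prefixNorm p m * prefixNorm p (m + 1)) ∧
      h (m + 1) m = prefixNorm p m / prefixNorm p (m + 1) := by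
  obtain ⟨hre, him⟩ := Complex.pos_iff.mp hpos
  obtain ⟨r, hr, hr_eq⟩ : ∃ r : ℝ, 0 < r ∧ (r : ℂ) = h (m + 1) m :=
    ⟨_, hre, Complex.ext rfl him⟩
  have hhead_null : ∑ l ∈ range (m + 1), h l m * p l = h 0 m * prefixNorm p m ^ 2 := by
    rw [← sum_range_mul_conj, mul_sum]
    exact sum_congr rfl fun l hl => by rw [hprop l (Nat.lt_succ_iff.mp (mem_range.mp hl))]; ring
  have hhead_norm : ∑ l ∈ range (m + 1), conj (h l m) * h l m
      = prefixNorm p m ^ 2 * (conj (h 0 m) * h 0 m) := by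
    rw [← sum_range_mul_conj, sum_mul]
    refine sum_congr rfl fun l hl => ?_
    rw [hprop l (Nat.lt_succ_iff.mp (mem_range.mp hl)), map_mul, Complex.conj_conj]
    ring
  rw [sum_range_succ, hhead_null, ← hr_eq] at hnull
  rw [sum_range_succ, hhead_norm, ← hr_eq, Complex.conj_ofReal] at hnorm
  rw [← hr_eq]
  exact column_coeffs_eq_of_unit_of_null hr (prefixNorm_pos (by simp [hp0]) m)
    (prefixNorm_pos (by simp [hp0]) (m + 1))
    (by rw [← sum_range_mul_conj, ← sum_range_mul_conj, sum_range_succ]) hnorm hnull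

lemma column_eq_conj_mul_head {m : ℕ} (hp0 : p 0 = 1)
    (hprev : ∀ t < m,
      (∀ j ≤ t, h j t = -(conj (p j) * p (t + 1)) / (prefixNorm p t * prefixNorm p (t + 1))) ∧
        h (t + 1) t = prefixNorm p t / prefixNorm p (t + 1))
    (horth : ∀ t < m, ∑ l ∈ range (t + 2), conj (h l t) * h l m = 0) :
    ∀ l ≤ m, h l m = conj (p l) * h 0 m := by
  intro l
  induction l using Nat.strong_induction_on with
  | _ l ih =>
  intro hl
  rcases l with _ | t
  · simp [hp0]
  obtain ⟨hcol, hsub⟩ := hprev t (by omega)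
  have hσsq := sum_range_mul_conj p t
  set σ := prefixNorm p t
  set τ := prefixNorm p (t + 1)
  have hσ0 : (σ : ℂ) ≠ 0 := Complex.ofReal_ne_zero.mpr (prefixNorm_pos (by simp [hp0]) t).ne'
  have hτ0 : (τ : ℂ) ≠ 0 :=
    Complex.ofReal_ne_zero.mpr (prefixNorm_pos (by simp [hp0]) (t + 1)).ne'
  have hhead : ∑ x ∈ range (t + 1), conj (h x t) * h x m
      = -(σ / τ) * (conj (p (t + 1)) * h 0 m) := by
    rw [show -(σ / τ) * (conj (p (t + 1)) * h 0 m) = (∑ x ∈ range (t + 1), p x * conj (p x)) *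
        (-(conj (p (t + 1)) * h 0 m) / (σ * τ)) by rw [hσsq]; field_simp, sum_mul]
    refine sum_congr rfl fun x hx => ?_
    have hxt : x ≤ t := Nat.lt_succ_iff.mp (mem_range.mp hx)
    rw [hcol x hxt, ih x (by omega) (by omega), map_div₀, map_neg, map_mul, map_mul,
      Complex.conj_conj, Complex.conj_ofReal, Complex.conj_ofReal]
    ring
  have horth_t := horth t (by omega)
  rw [sum_range_succ, hhead, hsub, map_div₀, Complex.conj_ofReal, Complex.conj_ofReal] at horth_t
  refine mul_left_cancel₀ (div_ne_zero hσ0 hτ0) ?_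
  linear_combination horth_t

theorem hessenberg_column_eq_of_isometric {N : ℕ} (hp0 : p 0 = 1)
    (horth : ∀ i j, i ≤ j → j + 1 < N →
      ∑ l ∈ range (i + 2), conj (h l i) * h l j = if i = j then 1 else 0)
    (hnull : ∀ c, c + 1 < N → ∑ l ∈ range (c + 2), h l c * p l = 0)
    (hsub : ∀ c, c + 1 < N → 0 < h (c + 1) c) {m : ℕ} (hm : m + 1 < N) :
    (∀ j ≤ m, h j m = -(conj (p j) * p (m + 1)) / (prefixNorm p m * prefixNorm p (m + 1))) ∧
      h (m + 1) m = prefixNorm p m / prefixNorm p (m + 1) := by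
  induction m using Nat.strong_induction_on with
  | _ m ih =>
  have hprop := column_eq_conj_mul_head hp0 (fun t ht => ih t ht (by omega))
    (fun t ht => by simpa [ht.ne] using horth t m ht.le hm)
  obtain ⟨hhead, hsubdiag⟩ := column_eq_of_proportional hp0 hprop
    (by simpa using horth m m le_rfl hm) (hnull m hm) (hsub m hm)
  refine ⟨fun j hj => ?_, hsubdiag⟩
  rw [hprop j hj, hhead]
  ring

end UnitaryHessenberg

section InnerProduct

variable {n : ℕ}

lemma inn_eq_star_dotProduct (x y : Fin n → ℂ) : inn x y = star x ⬝ᵥ y := rfl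

lemma inn_mulVec_mulVec {A : Matrix (Fin n) (Fin n) ℂ} (hA : Aᴴ * A = 1) (x y : Fin n → ℂ) :
    inn (A *ᵥ x) (A *ᵥ y) = inn x y := by
  rw [inn_eq_star_dotProduct, star_mulVec, dotProduct_mulVec, vecMul_vecMul, hA, vecMul_one]
  rfl

lemma inn_sum_smul_of_orthonormal {N : ℕ} {v : ℕ → Fin n → ℂ}
    (horth : ∀ i j : ℕ, i < N → j < N → inn (v i) (v j) = if i = j then 1 else 0)
    {a b : ℕ} (hab : a ≤ b) (hbN : b ≤ N) (c d : ℕ → ℂ) :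
    inn (∑ l ∈ range a, c l • v l) (∑ l ∈ range b, d l • v l)
      = ∑ l ∈ range a, conj (c l) * d l := by
  rw [inn_eq_star_dotProduct, star_sum, sum_dotProduct]
  refine sum_congr rfl fun l hl => ?_
  have hlb : l ∈ range b := range_subset_range.mpr hab hl
  have hlN : l < N := (mem_range.mp hlb).trans_le hbN
  rw [star_smul, smul_dotProduct, dotProduct_sum, sum_eq_single_of_mem l hlb fun j hj hjl => by
    rw [dotProduct_smul, ← inn_eq_star_dotProduct,
      horth l j hlN ((mem_range.mp hj).trans_le hbN), if_neg hjl.symm, smul_zero],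
    dotProduct_smul, ← inn_eq_star_dotProduct, horth l l hlN hlN, if_pos rfl]
  simp

end InnerProduct

def natEntry {α : Type*} [Zero α] {N : ℕ} (H : Matrix (Fin N) (Fin N) α) (i j : ℕ) : α :=
  if h : i < N ∧ j < N then H ⟨i, h.1⟩ ⟨j, h.2⟩ else 0

lemma natEntry_of_lt {α : Type*} [Zero α] {N : ℕ} (H : Matrix (Fin N) (Fin N) α) {i j : ℕ}
    (hi : i < N) (hj : j < N) : natEntry H i j = H ⟨i, hi⟩ ⟨j, hj⟩ :=
  dif_pos ⟨hi, hj⟩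

section Arnoldi

variable {n N : ℕ} {A : Matrix (Fin n) (Fin n) ℂ} {v : ℕ → Fin n → ℂ}
  {H : Matrix (Fin N) (Fin N) ℂ}

lemma mulVec_eq_sum_natEntry
    (harn : ∀ (k : ℕ) (hk : k + 1 < N),
      A.mulVec (v k) = ∑ j : Fin (k + 2),
        H ⟨(j : ℕ), Nat.lt_of_le_of_lt (Nat.lt_succ_iff.mp j.isLt) hk⟩
          ⟨k, Nat.lt_of_succ_lt hk⟩ • v (j : ℕ))
    {c : ℕ} (hc : c + 1 < N) :
    A *ᵥ v c = ∑ l ∈ range (c + 2), natEntry H l c • v l := by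
  rw [harn c hc, ← Fin.sum_univ_eq_sum_range]
  exact sum_congr rfl fun j _ => by rw [natEntry_of_lt]

lemma natEntry_columns_orthonormal
    (horth : ∀ i j : ℕ, i < N → j < N → inn (v i) (v j) = if i = j then 1 else 0)
    (hA : Aᴴ * A = 1)
    (harn : ∀ (k : ℕ) (hk : k + 1 < N),
      A.mulVec (v k) = ∑ j : Fin (k + 2),
        H ⟨(j : ℕ), Nat.lt_of_le_of_lt (Nat.lt_succ_iff.mp j.isLt) hk⟩
          ⟨k, Nat.lt_of_succ_lt hk⟩ • v (j : ℕ))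
    {i j : ℕ} (hij : i ≤ j) (hj : j + 1 < N) :
    ∑ l ∈ range (i + 2), conj (natEntry H l i) * natEntry H l j = if i = j then 1 else 0 := by
  rw [← inn_sum_smul_of_orthonormal horth (by omega : i + 2 ≤ j + 2) hj,
    ← mulVec_eq_sum_natEntry harn (by omega), ← mulVec_eq_sum_natEntry harn hj,
    inn_mulVec_mulVec hA, horth i j (by omega) (by omega)]

lemma sum_natEntry_mul_eval_zero {q : ℕ → ℂ[X]}
    (hqrec : ∀ (k : ℕ) (hk : k + 1 < N),
      Polynomial.C (H ⟨k + 1, hk⟩ ⟨k, Nat.lt_of_succ_lt hk⟩) * q (k + 1) =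
        Polynomial.X * q k -
          ∑ j : Fin (k + 1),
            Polynomial.C (H ⟨(j : ℕ), Nat.lt_trans j.isLt hk⟩ ⟨k, Nat.lt_of_succ_lt hk⟩) *
              q (j : ℕ))
    {c : ℕ} (hc : c + 1 < N) :
    ∑ l ∈ range (c + 2), natEntry H l c * (q l).eval 0 = 0 := by
  have hrec := congrArg (eval 0) (hqrec c hc)
  simp only [eval_mul, eval_C, eval_sub, eval_X, eval_finsetSum, zero_mul, zero_sub] at hrec
  rw [sum_range_succ, ← Fin.sum_univ_eq_sum_range, natEntry_of_lt H hc (by omega), hrec,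
    add_neg_eq_zero]
  exact sum_congr rfl fun j _ => by rw [natEntry_of_lt]

lemma natEntry_subdiag_pos
    (hsub : ∀ (k : ℕ) (hk : k + 1 < N),
      0 < (H ⟨k + 1, hk⟩ ⟨k, Nat.lt_of_succ_lt hk⟩).re ∧
        (H ⟨k + 1, hk⟩ ⟨k, Nat.lt_of_succ_lt hk⟩).im = 0)
    {c : ℕ} (hc : c + 1 < N) : 0 < natEntry H (c + 1) c := by
  rw [natEntry_of_lt H hc (by omega)]
  exact Complex.pos_iff.mpr ⟨(hsub c hc).1, (hsub c hc).2.symm⟩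

end Arnoldi

section Recurrences

variable {E : Type*} [AddCommGroup E] [Module ℂ E] {p : ℕ → ℂ}

lemma sum_range_smul_eq_of_column_eq {h : ℕ → ℂ} (v : ℕ → E) {m : ℕ}
    (hcol : ∀ j ≤ m, h j = -(conj (p j) * p (m + 1)) / (prefixNorm p m * prefixNorm p (m + 1)))
    (hsub : h (m + 1) = prefixNorm p m / prefixNorm p (m + 1)) :
    ∑ l ∈ range (m + 2), h l • v l =
      ((prefixNorm p m / prefixNorm p (m + 1) : ℝ) : ℂ) • v (m + 1) +
        (-p (m + 1) / prefixNorm p (m + 1)) •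
          (((prefixNorm p m)⁻¹ : ℝ) : ℂ) •
            ∑ j ∈ range (m + 1), conj (p j) • v j := by
  rw [sum_range_succ, hsub, add_comm, smul_smul, smul_sum, Complex.ofReal_div]
  congr 1
  refine sum_congr rfl fun j hj => ?_
  rw [hcol j (Nat.lt_succ_iff.mp (mem_range.mp hj)), smul_smul]
  congr 1
  push_cast
  ring

lemma prefixNorm_inv_smul_sum_succ (hp0 : p 0 ≠ 0) (v : ℕ → E) (k : ℕ) :
    (((prefixNorm p (k + 1))⁻¹ : ℝ) : ℂ) •
        ∑ j ∈ range (k + 1 + 1), conj (p j) • v j =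
      ((prefixNorm p k / prefixNorm p (k + 1) : ℝ) : ℂ) •
          (((prefixNorm p k)⁻¹ : ℝ) : ℂ) • ∑ j ∈ range (k + 1), conj (p j) • v j +
        (conj (p (k + 1)) / prefixNorm p (k + 1)) • v (k + 1) := by
  have hσ0 : (prefixNorm p k : ℂ) ≠ 0 := Complex.ofReal_ne_zero.mpr (prefixNorm_pos hp0 k).ne'
  rw [sum_range_succ _ (k + 1), smul_add, smul_smul, smul_smul]
  congr 2
  · push_cast
    field_simp
  · push_cast
    ring

end Recurrences

/-- Indices are `0`-based: `v_k` of the paper is `v (k - 1)`. -/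
theorem stmt17_general (n N : ℕ) (hN : 1 ≤ N)
    (A : Matrix (Fin n) (Fin n) ℂ)
    (v : ℕ → Fin n → ℂ)
    (horth : ∀ i j : ℕ, i < N → j < N → inn (v i) (v j) = if i = j then 1 else 0)
    (H : Matrix (Fin N) (Fin N) ℂ)
    (hsub : ∀ (k : ℕ) (hk : k + 1 < N),
      0 < (H ⟨k + 1, hk⟩ ⟨k, Nat.lt_of_succ_lt hk⟩).re ∧
        (H ⟨k + 1, hk⟩ ⟨k, Nat.lt_of_succ_lt hk⟩).im = 0)
    (harn : ∀ (k : ℕ) (hk : k + 1 < N),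
      A.mulVec (v k) = ∑ j : Fin (k + 2),
        H ⟨(j : ℕ), Nat.lt_of_le_of_lt (Nat.lt_succ_iff.mp j.isLt) hk⟩
          ⟨k, Nat.lt_of_succ_lt hk⟩ • v (j : ℕ))
    (q : ℕ → Polynomial ℂ) (hq0 : q 0 = 1)
    (hqrec : ∀ (k : ℕ) (hk : k + 1 < N),
      Polynomial.C (H ⟨k + 1, hk⟩ ⟨k, Nat.lt_of_succ_lt hk⟩) * q (k + 1) =
        Polynomial.X * q k -
          ∑ j : Fin (k + 1),
            Polynomial.C (H ⟨(j : ℕ), Nat.lt_trans j.isLt hk⟩ ⟨k, Nat.lt_of_succ_lt hk⟩) *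
              q (j : ℕ))
    (hA : Aᴴ * A = 1) :
    ∀ (k : ℕ) (hk1 : 1 ≤ k) (hkN : k < N),
      ∀ vtk vtk1 : Fin n → ℂ,
        vtk = (((sigmaP q 0 (k - 1))⁻¹ : ℝ) : ℂ) •
            ∑ j ∈ Finset.range k, (starRingEnd ℂ) ((q j).eval 0) • v j →
        vtk1 = (((sigmaP q 0 k)⁻¹ : ℝ) : ℂ) •
            ∑ j ∈ Finset.range (k + 1), (starRingEnd ℂ) ((q j).eval 0) • v j →
        H ⟨k, hkN⟩ ⟨k - 1, Nat.lt_of_le_of_lt (Nat.sub_le k 1) hkN⟩ =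
            ((sigmaP q 0 (k - 1) / sigmaP q 0 k : ℝ) : ℂ) ∧
        H ⟨0, hN⟩ ⟨k - 1, Nat.lt_of_le_of_lt (Nat.sub_le k 1) hkN⟩ =
            -((q k).eval 0) / ((sigmaP q 0 (k - 1) * sigmaP q 0 k : ℝ) : ℂ) ∧
        A.mulVec (v (k - 1)) =
            ((sigmaP q 0 (k - 1) / sigmaP q 0 k : ℝ) : ℂ) • v k +
              ((-1 : ℂ) ^ (k - 1) *
                ((-1 : ℂ) ^ k * (q k).eval 0 / (sigmaP q 0 k : ℂ))) • vtk ∧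
        vtk1 = ((sigmaP q 0 (k - 1) / sigmaP q 0 k : ℝ) : ℂ) • vtk +
            ((-1 : ℂ) ^ k *
              (starRingEnd ℂ) ((-1 : ℂ) ^ k * (q k).eval 0 / (sigmaP q 0 k : ℂ))) • v k := by
  intro k hk1 hkN vtk vtk1 hvt hvt1
  obtain ⟨m, rfl⟩ : ∃ m, k = m + 1 := ⟨k - 1, by omega⟩
  simp only [Nat.add_sub_cancel, sigmaP_eq_prefixNorm] at hvt hvt1 ⊢
  set p : ℕ → ℂ := fun j => (q j).eval 0
  have hp0 : p 0 = 1 := by simp [p, hq0]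
  obtain ⟨hcol, hsubdiag⟩ := hessenberg_column_eq_of_isometric hp0
    (fun i j hij hj => natEntry_columns_orthonormal horth hA harn hij hj)
    (fun c hc => sum_natEntry_mul_eval_zero hqrec hc) (fun c hc => natEntry_subdiag_pos hsub hc)
    hkN
  have hsign : ∀ j, ((-1 : ℂ) ^ j) ^ 2 = 1 := fun j => by
    rw [← pow_mul, pow_mul', neg_one_sq, one_pow]
  refine ⟨?_, ?_, ?_, ?_⟩
  · rw [← natEntry_of_lt H hkN (by omega), hsubdiag]
    push_cast
    rfl
  · rw [← natEntry_of_lt H hN (by omega), hcol 0 m.zero_le, hp0]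
    push_cast
    simp only [map_one, one_mul]
    rfl
  · rw [mulVec_eq_sum_natEntry harn hkN, sum_range_smul_eq_of_column_eq v hcol hsubdiag, hvt]
    congr 2
    rw [pow_succ]
    linear_combination (p (m + 1) / prefixNorm p (m + 1)) * hsign m
  · rw [hvt1, hvt, prefixNorm_inv_smul_sum_succ (by simp [hp0]), map_div₀, map_mul, map_pow,
      map_neg, map_one, Complex.conj_ofReal]
    congr 2
    linear_combination (-conj (p (m + 1)) / prefixNorm p (m + 1)) * hsign (m + 1)

/-- If `A` is unitary then for `1 ≤ k ≤ N-1`: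
`h_{k+1,k} = σ_{k-1}(0)/σ_k(0) = s_k(0)`, `h_{1,k} = -q_k(0)/(σ_{k-1}(0) σ_k(0))`, and with
`ṽ_k = σ_{k-1}(0)⁻¹ Σ_{j=0}^{k-1} conj(q_j(0)) v_{j+1}` the isometric Arnoldi recurrences
`A v_k = s_k(0) v_{k+1} + (-1)^{k-1} c_k(0) ṽ_k` and
`ṽ_{k+1} = s_k(0) ṽ_k + (-1)^k conj(c_k(0)) v_{k+1}` hold
(`0`-based: `v_k` is `v (k-1)`, `v_{k+1}` is `v k`). -/
theorem stmt17 (n N : ℕ) (hN : 1 ≤ N) (hNn : N ≤ n)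
    (A : Matrix (Fin n) (Fin n) ℂ) (b : Fin n → ℂ) (hb : b ≠ 0)
    (v : ℕ → Fin n → ℂ)
    (horth : ∀ i j : ℕ, i < N → j < N → inn (v i) (v j) = if i = j then 1 else 0)
    (hv1 : v 0 = (((nrm b)⁻¹ : ℝ) : ℂ) • b)
    (H : Matrix (Fin N) (Fin N) ℂ)
    (hHess : ∀ i j : Fin N, (j : ℕ) + 1 < (i : ℕ) → H i j = 0)
    (hsub : ∀ (k : ℕ) (hk : k + 1 < N),
      0 < (H ⟨k + 1, hk⟩ ⟨k, Nat.lt_of_succ_lt hk⟩).re ∧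
        (H ⟨k + 1, hk⟩ ⟨k, Nat.lt_of_succ_lt hk⟩).im = 0)
    (harn : ∀ (k : ℕ) (hk : k + 1 < N),
      A.mulVec (v k) = ∑ j : Fin (k + 2),
        H ⟨(j : ℕ), Nat.lt_of_le_of_lt (Nat.lt_succ_iff.mp j.isLt) hk⟩
          ⟨k, Nat.lt_of_succ_lt hk⟩ • v (j : ℕ))
    (harnN : A.mulVec (v (N - 1)) =
      ∑ j : Fin N, H j ⟨N - 1, Nat.sub_lt hN Nat.one_pos⟩ • v (j : ℕ))
    (q : ℕ → Polynomial ℂ) (hq0 : q 0 = 1)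
    (hqrec : ∀ (k : ℕ) (hk : k + 1 < N),
      Polynomial.C (H ⟨k + 1, hk⟩ ⟨k, Nat.lt_of_succ_lt hk⟩) * q (k + 1) =
        Polynomial.X * q k -
          ∑ j : Fin (k + 1),
            Polynomial.C (H ⟨(j : ℕ), Nat.lt_trans j.isLt hk⟩ ⟨k, Nat.lt_of_succ_lt hk⟩) *
              q (j : ℕ))
    (hA : Aᴴ * A = 1) :
    ∀ (k : ℕ) (hk1 : 1 ≤ k) (hkN : k < N),
      ∀ vtk vtk1 : Fin n → ℂ,
        vtk = (((sigmaP q 0 (k - 1))⁻¹ : ℝ) : ℂ) •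
            ∑ j ∈ Finset.range k, (starRingEnd ℂ) ((q j).eval 0) • v j →
        vtk1 = (((sigmaP q 0 k)⁻¹ : ℝ) : ℂ) •
            ∑ j ∈ Finset.range (k + 1), (starRingEnd ℂ) ((q j).eval 0) • v j →
        H ⟨k, hkN⟩ ⟨k - 1, Nat.lt_of_le_of_lt (Nat.sub_le k 1) hkN⟩ =
            ((sigmaP q 0 (k - 1) / sigmaP q 0 k : ℝ) : ℂ) ∧
        H ⟨0, hN⟩ ⟨k - 1, Nat.lt_of_le_of_lt (Nat.sub_le k 1) hkN⟩ =
            -((q k).eval 0) / ((sigmaP q 0 (k - 1) * sigmaP q 0 k : ℝ) : ℂ) ∧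
        A.mulVec (v (k - 1)) =
            ((sigmaP q 0 (k - 1) / sigmaP q 0 k : ℝ) : ℂ) • v k +
              ((-1 : ℂ) ^ (k - 1) *
                ((-1 : ℂ) ^ k * (q k).eval 0 / (sigmaP q 0 k : ℂ))) • vtk ∧
        vtk1 = ((sigmaP q 0 (k - 1) / sigmaP q 0 k : ℝ) : ℂ) • vtk +
            ((-1 : ℂ) ^ k *
              (starRingEnd ℂ) ((-1 : ℂ) ^ k * (q k).eval 0 / (sigmaP q 0 k : ℂ))) • v k :=
  stmt17_general n N hN A v horth H hsub harn q hq0 hqrec hA
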